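/- Let R₁, R₂ ⊆ ℤ^d be finite regions with |∂R₁|, |∂R₂| ≤ n and B_ℓ(R₁) = B_ℓ(R₂) for some ℓ > 0. Then there is a constant b₃ = b₃(d) such that |R₁ Δ R₂|^{1/2} ≤ b₃ 2^{ℓ/2} n^{1/2}. -/

import Mathlib

/-- Points of the lattice `ℤ^d`. -/
abbrev Pt (d : ℕ) := Fin d → ℤ

/-- Two lattice points are adjacent if they are distinct and at `L^∞`-distance at most 1
(i.e. exactly 1). -/
def adj {d : ℕ} (s t : Pt d) : Prop := s ≠ t ∧ ∀ i, |s i - t i| ≤ 1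

/-- A set `R ⊆ ℤ^d` is connected if any two of its points are joined by a path inside `R`
whose consecutive points are at `L^∞`-distance 1. -/
def connectedIn {d : ℕ} (R : Set (Pt d)) : Prop :=
  ∀ s ∈ R, ∀ t ∈ R, Relation.ReflTransGen (fun a b => a ∈ R ∧ b ∈ R ∧ adj a b) s t

/-- The external boundary `∂R = {s ∉ R : dist_∞(s, R) = 1}`. -/
def extBoundary {d : ℕ} (R : Set (Pt d)) : Set (Pt d) :=
  {s | s ∉ R ∧ ∃ t ∈ R, adj s t}

/-- The interior `Int R`: the union of the finite connected components of the complement. -/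
def latticeInt {d : ℕ} (R : Set (Pt d)) : Set (Pt d) :=
  {s | s ∉ R ∧
    Set.Finite {t | Relation.ReflTransGen (fun a b => a ∉ R ∧ b ∉ R ∧ adj a b) s t}}

/-- The `ℓ`-cube based at `2^ℓ s`: `(∏_i [2^ℓ s_i, 2^ℓ (s_i+1))) ∩ ℤ^d`. -/
def cube {d : ℕ} (ℓ : ℕ) (s : Pt d) : Set (Pt d) :=
  {t | ∀ i, 2 ^ ℓ * s i ≤ t i ∧ t i < 2 ^ ℓ * (s i + 1)}

/-- The coarse-grained region `B_ℓ(R)`: the union of all `ℓ`-cubes containing at least half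
of their `2^{ℓ d}` points in `R`. -/
def coarse {d : ℕ} (ℓ : ℕ) (R : Set (Pt d)) : Set (Pt d) :=
  ⋃ s ∈ {s : Pt d | 2 ^ (ℓ * d) ≤ 2 * (cube ℓ s ∩ R).ncard}, cube ℓ s

/-!
Both regions are close to their common coarse-graining: `|R Δ B_ℓ(R)| ≤ (2d+1) 2^ℓ |∂R|`, so the
triangle inequality for `Δ` gives `|R₁ Δ R₂| ≤ 2 (2d+1) 2^ℓ n`.

The single-region bound is proved cube by cube. On an `ℓ`-cube `Q`, `R Δ B_ℓ(R)` is the smaller of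
`Q ∩ R` and `Q \ R`, and a discrete isoperimetric inequality bounds this minority by
`(2d+1) 2^ℓ |Q ∩ ∂R|`. Its only input is that `∂R` meets every axis-parallel segment joining a point
of `R` to a point outside `R`. It is proved by induction on the number of axes along which the box
is nontrivial: cut the box into slices orthogonal to one axis; some slice has `R` as its minority,
and moving any other slice onto it along the axis changes each count by at most the number of
crossing lines, each of which contains a point of `∂R`.
-/

open Finset Function

noncomputable section

variable {d : ℕ}

def latticeBox (c : Pt d) (n : Fin d → ℕ) : Finset (Pt d) :=
  Fintype.piFinset fun i => Ico (c i) (c i + n i)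

section LatticeBox

variable {c : Pt d} {n : Fin d → ℕ}

@[simp]
lemma mem_latticeBox {x : Pt d} : x ∈ latticeBox c n ↔ ∀ i, c i ≤ x i ∧ x i < c i + n i := by
  simp [latticeBox]

lemma card_latticeBox : #(latticeBox c n) = ∏ i, n i := by
  simp [latticeBox]

lemma update_mem_latticeBox {x : Pt d} {j : Fin d} {w : ℤ} (hx : x ∈ latticeBox c n)
    (hw : w ∈ Ico (c j) (c j + n j)) : update x j w ∈ latticeBox c n := by
  rw [mem_Ico] at hw
  rw [mem_latticeBox] at hx ⊢
  intro i
  rcases eq_or_ne i j with rfl | hi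
  · simpa using hw
  · simpa [hi] using hx i

lemma filter_latticeBox_apply_eq {j : Fin d} {v : ℤ} (hv : v ∈ Ico (c j) (c j + n j)) :
    {x ∈ latticeBox c n | x j = v} = latticeBox (update c j v) (update n j 1) := by
  rw [mem_Ico] at hv
  ext x
  simp only [mem_filter, mem_latticeBox]
  constructor
  · rintro ⟨hx, rfl⟩ i
    rcases eq_or_ne i j with rfl | hi
    · simp
    · simpa [hi] using hx i
  · intro hx
    have hxj : x j = v := by have := hx j; simp only [update_self, Nat.cast_one] at this; omega
    refine ⟨fun i => ?_, hxj⟩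
    rcases eq_or_ne i j with rfl | hi
    · omega
    · simpa [hi] using hx i

lemma card_filter_latticeBox_eq_sum (j : Fin d) (p : Pt d → Prop) [DecidablePred p] :
    #{x ∈ latticeBox c n | p x} =
      ∑ v ∈ Ico (c j) (c j + n j), #{x ∈ latticeBox c n | x j = v ∧ p x} := by
  rw [card_eq_sum_card_fiberwise (f := (· j)) (t := Ico (c j) (c j + n j)) fun x hx => ?_]
  · simp only [filter_filter, and_comm]
  · simpa using (mem_latticeBox.1 (mem_filter.1 hx).1) j

end LatticeBox

lemma card_filter_mem_add_card_filter_mem_compl {α : Type*} (s : Finset α) (A : Set α)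
    [DecidablePred (· ∈ A)] : #{x ∈ s | x ∈ A} + #{x ∈ s | x ∈ Aᶜ} = #s :=
  card_filter_add_card_filter_not (· ∈ A)

def SeparatesAlongAxes (A B : Set (Pt d)) : Prop :=
  ∀ (x : Pt d) (j : Fin d) (t : ℤ), x ∈ A → update x j t ∉ A →
    ∃ u ∈ Set.uIcc (x j) t, update x j u ∈ B

lemma SeparatesAlongAxes.compl {A B : Set (Pt d)} (h : SeparatesAlongAxes A B) :
    SeparatesAlongAxes Aᶜ B := by
  intro x j t hx ht
  obtain ⟨u, hu, hB⟩ := h (update x j t) j (x j) (not_not.1 ht) (by simpa using hx)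
  exact ⟨u, by simpa [Set.uIcc_comm] using hu, by simpa using hB⟩

lemma Int.exists_mem_Icc_not_and_sub_one {p : ℤ → Prop} {a b : ℤ} (hab : a ≤ b) (ha : p a)
    (hb : ¬ p b) : ∃ u ∈ Set.Icc a b, ¬ p u ∧ p (u - 1) := by
  obtain ⟨k, hk⟩ := Int.eq_ofNat_of_zero_le (sub_nonneg.2 hab)
  obtain rfl : b = a + k := by omega
  clear hab hk
  induction k with
  | zero => exact absurd ha (by simpa using hb)
  | succ k ih =>
    by_cases hk : p (a + k)
    · exact ⟨a + (k + 1 : ℕ), ⟨by omega, le_rfl⟩, hb, by convert hk using 2; push_cast; ring⟩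
    · obtain ⟨u, hu, hu'⟩ := ih hk
      exact ⟨u, ⟨hu.1, by have := hu.2; push_cast; omega⟩, hu'⟩

lemma Int.exists_mem_uIcc_not_and_adjacent {p : ℤ → Prop} {a b : ℤ} (ha : p a) (hb : ¬ p b) :
    ∃ u ∈ Set.uIcc a b, ¬ p u ∧ (p (u - 1) ∨ p (u + 1)) := by
  rcases le_total a b with hab | hba
  · obtain ⟨u, hu, hpu, hpu'⟩ := exists_mem_Icc_not_and_sub_one hab ha hb
    exact ⟨u, Set.Icc_subset_uIcc hu, hpu, .inl hpu'⟩
  · obtain ⟨u, hu, hpu, hpu'⟩ :=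
      exists_mem_Icc_not_and_sub_one (p := fun u => p (-u)) (neg_le_neg hba) (by simpa) (by simpa)
    refine ⟨-u, Set.Icc_subset_uIcc' ⟨by linarith [hu.2], by linarith [hu.1]⟩, hpu, .inr ?_⟩
    convert hpu' using 2
    ring

lemma adj_update_update {x : Pt d} {j : Fin d} {u w : ℤ} (h : |u - w| = 1) :
    adj (update x j u) (update x j w) := by
  refine ⟨fun hx => ?_, fun i => ?_⟩
  · have := congrFun hx j
    simp_all
  · rcases eq_or_ne i j with rfl | hi
    · simp [h]
    · simp [hi]

lemma separatesAlongAxes_extBoundary (A : Set (Pt d)) : SeparatesAlongAxes A (extBoundary A) := by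
  intro x j t hx ht
  obtain ⟨u, hu, hnot, hnb⟩ := Int.exists_mem_uIcc_not_and_adjacent
    (p := fun u => update x j u ∈ A) (a := x j) (by simpa using hx) ht
  refine ⟨u, hu, hnot, ?_⟩
  rcases hnb with h | h <;> exact ⟨_, h, adj_update_update (by simp)⟩

section Isoperimetry

variable {A B : Set (Pt d)} [DecidablePred (· ∈ A)] [DecidablePred (· ∈ B)]
  {c : Pt d} {n : Fin d → ℕ} {j : Fin d} {v w : ℤ}

lemma card_slice_le_card_slice_add (P : Set (Pt d)) [DecidablePred (· ∈ P)]
    (hw : w ∈ Ico (c j) (c j + n j)) :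
    #{x ∈ latticeBox c n | x j = v ∧ x ∈ P} ≤ #{x ∈ latticeBox c n | x j = w ∧ x ∈ P} +
      #{x ∈ latticeBox c n | x j = v ∧ x ∈ P ∧ update x j w ∉ P} := by
  set s := {x ∈ latticeBox c n | x j = v ∧ x ∈ P}
  rw [← card_filter_add_card_filter_not (s := s) (update · j w ∈ P)]
  gcongr ?_ + ?_
  · refine card_le_card_of_injOn (update · j w) (fun x hx => ?_) fun x hx y hy hxy => ?_
    · simp only [s, mem_coe, mem_filter] at hx ⊢
      exact ⟨update_mem_latticeBox hx.1.1 hw, by simp, hx.2⟩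
    · simp only [s, mem_coe, mem_filter] at hx hy hxy
      calc x = update (update x j w) j (x j) := by simp
        _ = update (update y j w) j (y j) := by rw [hxy, hx.1.2.1, hy.1.2.1]
        _ = y := by simp
  · exact card_le_card fun x hx => by simp_all [s]

lemma card_slice_crossing_le (hAB : SeparatesAlongAxes A B) (hw : w ∈ Ico (c j) (c j + n j)) :
    #{x ∈ latticeBox c n | x j = v ∧ x ∈ A ∧ update x j w ∉ A} ≤ #{x ∈ latticeBox c n | x ∈ B} :=
  calc _ ≤ #(image (update · j v) {x ∈ latticeBox c n | x ∈ B}) := card_le_card fun x hx => by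
        simp only [mem_filter] at hx
        obtain ⟨hxQ, rfl, hxA, hwA⟩ := hx
        obtain ⟨u, hu, huB⟩ := hAB x j w hxA hwA
        refine mem_image.2 ⟨update x j u, mem_filter.2 ⟨update_mem_latticeBox hxQ ?_, huB⟩, by simp⟩
        have := (mem_latticeBox.1 hxQ) j
        rw [mem_Ico] at hw ⊢
        rw [Set.mem_uIcc] at hu
        omega
    _ ≤ _ := card_image_le

lemma card_filter_latticeBox_le_of_le_compl (hAB : SeparatesAlongAxes A B) {K L : ℕ}
    (hnj : n j ≤ L)
    (hslice : ∀ v ∈ Ico (c j) (c j + n j),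
      min #{x ∈ latticeBox c n | x j = v ∧ x ∈ A} #{x ∈ latticeBox c n | x j = v ∧ x ∈ Aᶜ} ≤
        K * #{x ∈ latticeBox c n | x j = v ∧ x ∈ B})
    (hA : #{x ∈ latticeBox c n | x ∈ A} ≤ #{x ∈ latticeBox c n | x ∈ Aᶜ}) :
    #{x ∈ latticeBox c n | x ∈ A} ≤ (K + 2 * L) * #{x ∈ latticeBox c n | x ∈ B} := by
  -- Moving slice `v` along axis `j` onto a slice `w` where `A` is the minority changes the counts
  -- of `A` and of `Aᶜ` by at most the number of crossing lines, and each of those meets `B`.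
  have hslice_le : ∀ v ∈ Ico (c j) (c j + n j), #{x ∈ latticeBox c n | x j = v ∧ x ∈ A} ≤
      min #{x ∈ latticeBox c n | x j = v ∧ x ∈ A} #{x ∈ latticeBox c n | x j = v ∧ x ∈ Aᶜ} +
        2 * #{x ∈ latticeBox c n | x ∈ B} := by
    intro v hv
    obtain ⟨w, hw, hwA⟩ : ∃ w ∈ Ico (c j) (c j + n j),
        #{x ∈ latticeBox c n | x j = w ∧ x ∈ A} ≤ #{x ∈ latticeBox c n | x j = w ∧ x ∈ Aᶜ} :=
      exists_le_of_sum_le ⟨v, hv⟩ <| by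
        rwa [← card_filter_latticeBox_eq_sum, ← card_filter_latticeBox_eq_sum]
    have := card_slice_le_card_slice_add (v := v) A hw
    have := card_slice_le_card_slice_add (v := w) Aᶜ hv
    have := card_slice_crossing_le (v := v) hAB hw
    have := card_slice_crossing_le (v := w) hAB.compl hv
    omega
  calc #{x ∈ latticeBox c n | x ∈ A}
      = ∑ v ∈ Ico (c j) (c j + n j), #{x ∈ latticeBox c n | x j = v ∧ x ∈ A} :=
        card_filter_latticeBox_eq_sum _ _
    _ ≤ ∑ v ∈ Ico (c j) (c j + n j),
          (K * #{x ∈ latticeBox c n | x j = v ∧ x ∈ B} + 2 * #{x ∈ latticeBox c n | x ∈ B}) :=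
        sum_le_sum fun v hv => (hslice_le v hv).trans (by gcongr; exact hslice v hv)
    _ = K * #{x ∈ latticeBox c n | x ∈ B} + n j * (2 * #{x ∈ latticeBox c n | x ∈ B}) := by
        rw [sum_add_distrib, ← mul_sum, ← card_filter_latticeBox_eq_sum, sum_const, Int.card_Ico,
          smul_eq_mul]
        simp
    _ ≤ (K + 2 * L) * #{x ∈ latticeBox c n | x ∈ B} := by
        nlinarith [Nat.mul_le_mul_right (2 * #{x ∈ latticeBox c n | x ∈ B}) hnj]

theorem min_card_filter_latticeBox_le (hAB : SeparatesAlongAxes A B) (L : ℕ)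
    (S : Finset (Fin d)) (c : Pt d) (n : Fin d → ℕ) (hS : ∀ i ∈ S, n i ≤ L)
    (hSc : ∀ i ∉ S, n i ≤ 1) :
    min #{x ∈ latticeBox c n | x ∈ A} #{x ∈ latticeBox c n | x ∈ Aᶜ} ≤
      (2 * #S + 1) * L * #{x ∈ latticeBox c n | x ∈ B} := by
  induction S using Finset.induction_on generalizing c n with
  | empty =>
    have hQ : #(latticeBox c n) ≤ 1 := by
      rw [card_latticeBox]
      exact prod_le_one' fun i _ => hSc i (notMem_empty i)
    have := card_filter_mem_add_card_filter_mem_compl (latticeBox c n) A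
    omega
  | insert j S hj ih =>
    have hslice_eq : ∀ v ∈ Ico (c j) (c j + n j), ∀ (p : Pt d → Prop) [DecidablePred p],
        {x ∈ latticeBox c n | x j = v ∧ p x} =
          {x ∈ latticeBox (update c j v) (update n j 1) | p x} := by
      intro v hv p _
      rw [← filter_latticeBox_apply_eq hv, filter_filter]
    have hmin : ∀ v ∈ Ico (c j) (c j + n j),
        min #{x ∈ latticeBox c n | x j = v ∧ x ∈ A} #{x ∈ latticeBox c n | x j = v ∧ x ∈ Aᶜ} ≤
          (2 * #S + 1) * L * #{x ∈ latticeBox c n | x j = v ∧ x ∈ B} := by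
      intro v hv
      simp only [hslice_eq v hv]
      refine ih _ _ (fun i hi => ?_) fun i hi => ?_
      · rw [update_of_ne (ne_of_mem_of_not_mem hi hj)]
        exact hS i (mem_insert_of_mem hi)
      · rcases eq_or_ne i j with rfl | hij
        · simp
        · rw [update_of_ne hij]
          exact hSc i (by simp [hij, hi])
    have hL := hS j (mem_insert_self j S)
    rw [card_insert_of_notMem hj, show (2 * (#S + 1) + 1) * L = (2 * #S + 1) * L + 2 * L by ring]
    rcases le_total #{x ∈ latticeBox c n | x ∈ A} #{x ∈ latticeBox c n | x ∈ Aᶜ} with hA | hA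
    · exact (min_le_left _ _).trans (card_filter_latticeBox_le_of_le_compl hAB hL hmin hA)
    · refine (min_le_right _ _).trans ?_
      refine card_filter_latticeBox_le_of_le_compl hAB.compl hL (fun v hv => ?_) ?_
      · simpa only [compl_compl, min_comm] using hmin v hv
      · simpa only [compl_compl] using hA

end Isoperimetry

section CoarseGraining

variable {ℓ : ℕ} {R : Set (Pt d)}

def cubeIndex (ℓ : ℕ) (t : Pt d) : Pt d := fun i => t i / 2 ^ ℓ

def cubeFinset (ℓ : ℕ) (s : Pt d) : Finset (Pt d) :=
  latticeBox (fun i => 2 ^ ℓ * s i) fun _ => 2 ^ ℓ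

lemma mem_cube_iff_cubeIndex_eq {s t : Pt d} : t ∈ cube ℓ s ↔ cubeIndex ℓ t = s := by
  have h2 : (0 : ℤ) < 2 ^ ℓ := by positivity
  simp only [cube, Set.mem_ofPred_eq, cubeIndex, funext_iff]
  refine forall_congr' fun i => ⟨fun ⟨hlo, hhi⟩ => ?_, ?_⟩
  · have := (Int.le_ediv_iff_mul_le h2).2 (by linarith : s i * 2 ^ ℓ ≤ t i)
    have := (Int.ediv_lt_iff_lt_mul h2).2 (by linarith : t i < (s i + 1) * 2 ^ ℓ)
    omega
  · intro h
    rw [← h]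
    have := Int.emod_add_mul_ediv (t i) (2 ^ ℓ)
    have := Int.emod_nonneg (t i) h2.ne'
    have := Int.emod_lt_of_pos (t i) h2
    constructor <;> linarith

lemma coe_cubeFinset (s : Pt d) : (cubeFinset ℓ s : Set (Pt d)) = cube ℓ s := by
  ext t
  simp [cubeFinset, cube, mul_add]

lemma card_cubeFinset (s : Pt d) : #(cubeFinset ℓ s) = 2 ^ (ℓ * d) := by
  simp [cubeFinset, card_latticeBox, pow_mul]

lemma cube_finite (s : Pt d) : (cube ℓ s).Finite :=
  coe_cubeFinset (ℓ := ℓ) s ▸ (cubeFinset ℓ s).finite_toSet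

lemma ncard_cube (s : Pt d) : (cube ℓ s).ncard = 2 ^ (ℓ * d) := by
  rw [← coe_cubeFinset, Set.ncard_coe_finset, card_cubeFinset]

lemma ncard_cube_inter (s : Pt d) (X : Set (Pt d)) [DecidablePred (· ∈ X)] :
    (cube ℓ s ∩ X).ncard = #{x ∈ cubeFinset ℓ s | x ∈ X} := by
  rw [← coe_cubeFinset, ← Set.ncard_coe_finset, coe_filter]
  rfl

lemma mem_coarse_iff {t : Pt d} :
    t ∈ coarse ℓ R ↔ 2 ^ (ℓ * d) ≤ 2 * (cube ℓ (cubeIndex ℓ t) ∩ R).ncard := by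
  simp only [coarse, Set.mem_iUnion₂, exists_prop, mem_cube_iff_cubeIndex_eq, Set.mem_ofPred_eq]
  exact ⟨fun ⟨_, hs, rfl⟩ => hs, fun h => ⟨_, h, rfl⟩⟩

lemma coarse_finite (hR : R.Finite) : (coarse ℓ R).Finite := by
  refine Set.Finite.biUnion ((hR.image (cubeIndex ℓ)).subset fun s hs => ?_) fun s _ => ?_
  · have hpos : 0 < 2 ^ (ℓ * d) := by positivity
    obtain ⟨t, ht⟩ := Set.nonempty_of_ncard_ne_zero (s := cube ℓ s ∩ R) (by
      rw [Set.mem_ofPred_eq] at hs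
      omega)
    exact ⟨t, ht.2, mem_cube_iff_cubeIndex_eq.1 ht.1⟩
  · exact cube_finite s

lemma extBoundary_finite (hR : R.Finite) : (extBoundary R).Finite := by
  refine (hR.add (Set.Finite.pi fun _ => Set.finite_Icc (-1 : ℤ) 1)).subset ?_
  rintro s ⟨-, t, ht, hst⟩
  refine ⟨t, ht, s - t, fun i _ => ?_, by simp⟩
  simpa [abs_le] using hst.2 i

lemma ncard_cube_inter_symmDiff_coarse_le_min (s : Pt d) :
    (cube ℓ s ∩ symmDiff R (coarse ℓ R)).ncard ≤
      min (cube ℓ s ∩ R).ncard (cube ℓ s ∩ Rᶜ).ncard := by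
  have hsum : (cube ℓ s ∩ R).ncard + (cube ℓ s ∩ Rᶜ).ncard = 2 ^ (ℓ * d) := by
    rw [← Set.sdiff_eq, Set.ncard_inter_add_ncard_sdiff_eq_ncard _ _ (cube_finite s), ncard_cube]
  have hC : ∀ t ∈ cube ℓ s, t ∈ coarse ℓ R ↔ 2 ^ (ℓ * d) ≤ 2 * (cube ℓ s ∩ R).ncard :=
    fun t ht => by rw [mem_coarse_iff, mem_cube_iff_cubeIndex_eq.1 ht]
  by_cases hmaj : 2 ^ (ℓ * d) ≤ 2 * (cube ℓ s ∩ R).ncard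
  · have : cube ℓ s ∩ symmDiff R (coarse ℓ R) = cube ℓ s ∩ Rᶜ :=
      Set.ext fun t => and_congr_right fun ht => by simp [Set.mem_symmDiff, (hC t ht).2 hmaj]
    rw [this]
    omega
  · have : cube ℓ s ∩ symmDiff R (coarse ℓ R) = cube ℓ s ∩ R :=
      Set.ext fun t => and_congr_right fun ht => by simp [Set.mem_symmDiff, (hC t ht).not.2 hmaj]
    rw [this]
    omega

lemma ncard_cube_inter_symmDiff_coarse_le (s : Pt d) :
    (cube ℓ s ∩ symmDiff R (coarse ℓ R)).ncard ≤
      (2 * d + 1) * 2 ^ ℓ * (cube ℓ s ∩ extBoundary R).ncard := by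
  classical
  refine (ncard_cube_inter_symmDiff_coarse_le_min s).trans ?_
  simp only [ncard_cube_inter, cubeFinset]
  simpa using min_card_filter_latticeBox_le (separatesAlongAxes_extBoundary R) (2 ^ ℓ) univ
    (fun i => 2 ^ ℓ * s i) (fun _ => 2 ^ ℓ) (fun _ _ => le_rfl) (by simp)

lemma card_filter_cubeIndex_eq {X : Set (Pt d)} (hX : X.Finite) (s : Pt d) :
    #{x ∈ hX.toFinset | cubeIndex ℓ x = s} = (cube ℓ s ∩ X).ncard := by
  rw [← Set.ncard_coe_finset]
  congr
  ext x
  simp [mem_cube_iff_cubeIndex_eq, and_comm]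

theorem ncard_symmDiff_coarse_le (hR : R.Finite) :
    (symmDiff R (coarse ℓ R)).ncard ≤ (2 * d + 1) * 2 ^ ℓ * (extBoundary R).ncard := by
  have hD := hR.symmDiff (coarse_finite (ℓ := ℓ) hR)
  have hE := extBoundary_finite hR
  rw [Set.ncard_eq_toFinset_card _ hD, Set.ncard_eq_toFinset_card _ hE]
  calc #hD.toFinset
      = ∑ s ∈ hD.toFinset.image (cubeIndex ℓ), #{x ∈ hD.toFinset | cubeIndex ℓ x = s} :=
        card_eq_sum_card_image _ _
    _ ≤ ∑ s ∈ hD.toFinset.image (cubeIndex ℓ),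
          (2 * d + 1) * 2 ^ ℓ * #{x ∈ hE.toFinset | cubeIndex ℓ x = s} := by
        refine sum_le_sum fun s _ => ?_
        rw [card_filter_cubeIndex_eq, card_filter_cubeIndex_eq]
        exact ncard_cube_inter_symmDiff_coarse_le s
    _ = (2 * d + 1) * 2 ^ ℓ *
          #{x ∈ hE.toFinset | cubeIndex ℓ x ∈ hD.toFinset.image (cubeIndex ℓ)} := by
        rw [← mul_sum, sum_card_fiberwise_eq_card_filter]
    _ ≤ (2 * d + 1) * 2 ^ ℓ * #hE.toFinset := by
        gcongr
        exact filter_subset _ _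

end CoarseGraining

end

theorem symmdiff_bound_from_equal_coarse_general (d : ℕ) :
    ∃ b₃ : ℝ, 0 < b₃ ∧
      ∀ (n ℓ : ℕ), 0 < ℓ →
        ∀ (R₁ R₂ : Set (Pt d)), R₁.Finite → R₂.Finite →
          (extBoundary R₁).ncard ≤ n → (extBoundary R₂).ncard ≤ n →
          coarse ℓ R₁ = coarse ℓ R₂ →
          Real.sqrt ((symmDiff R₁ R₂).ncard)
            ≤ b₃ * (2 : ℝ) ^ ((ℓ : ℝ) / 2) * Real.sqrt n := by
  refine ⟨√(2 * (2 * d + 1)), by positivity, fun n ℓ _ R₁ R₂ hR₁ hR₂ hn₁ hn₂ hC => ?_⟩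
  have h₁ := ncard_symmDiff_coarse_le (ℓ := ℓ) hR₁
  have h₂ := ncard_symmDiff_coarse_le (ℓ := ℓ) hR₂
  rw [← hC, symmDiff_comm] at h₂
  have hcount : (symmDiff R₁ R₂).ncard ≤ 2 * (2 * d + 1) * 2 ^ ℓ * n :=
    calc (symmDiff R₁ R₂).ncard
        ≤ (symmDiff R₁ (coarse ℓ R₁) ∪ symmDiff (coarse ℓ R₁) R₂).ncard :=
          Set.ncard_le_ncard (symmDiff_triangle _ _ _)
            ((hR₁.symmDiff (coarse_finite hR₁)).union ((coarse_finite hR₁).symmDiff hR₂))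
      _ ≤ (symmDiff R₁ (coarse ℓ R₁)).ncard + (symmDiff (coarse ℓ R₁) R₂).ncard :=
          Set.ncard_union_le _ _
      _ ≤ 2 * (2 * d + 1) * 2 ^ ℓ * n := by
          nlinarith [Nat.mul_le_mul_left ((2 * d + 1) * 2 ^ ℓ) hn₁,
            Nat.mul_le_mul_left ((2 * d + 1) * 2 ^ ℓ) hn₂]
  have hsqrt : √((2 : ℝ) ^ ℓ) = (2 : ℝ) ^ ((ℓ : ℝ) / 2) := by
    rw [Real.sqrt_eq_rpow, ← Real.rpow_natCast, ← Real.rpow_mul zero_le_two, mul_one_div]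
  calc √((symmDiff R₁ R₂).ncard : ℝ)
      ≤ √(2 * (2 * d + 1) * 2 ^ ℓ * n) := Real.sqrt_le_sqrt (by exact_mod_cast hcount)
    _ = √(2 * (2 * d + 1)) * (2 : ℝ) ^ ((ℓ : ℝ) / 2) * √n := by
        rw [Real.sqrt_mul (by positivity), Real.sqrt_mul (by positivity), hsqrt]

/-- there is a constant `b₃ = b₃(d)` such that whenever finite regions
`R₁, R₂ ⊆ ℤ^d` have external boundaries of cardinality at most `n` and identical
coarse-grainings `B_ℓ(R₁) = B_ℓ(R₂)` for some `ℓ > 0`, then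
`|R₁ Δ R₂|^{1/2} ≤ b₃ 2^{ℓ/2} n^{1/2}`. -/
theorem symmdiff_bound_from_equal_coarse (d : ℕ) (hd : 1 ≤ d) :
    ∃ b₃ : ℝ, 0 < b₃ ∧
      ∀ (n ℓ : ℕ), 0 < ℓ →
        ∀ (R₁ R₂ : Set (Pt d)), R₁.Finite → R₂.Finite →
          (extBoundary R₁).ncard ≤ n → (extBoundary R₂).ncard ≤ n →
          coarse ℓ R₁ = coarse ℓ R₂ →
          Real.sqrt ((symmDiff R₁ R₂).ncard)
            ≤ b₃ * (2 : ℝ) ^ ((ℓ : ℝ) / 2) * Real.sqrt n :=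
  symmdiff_bound_from_equal_coarse_general d
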